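/- Let D = {(1,x,y,0,0) ∈ ℝ⁵ : x²+(y-1)² ≤ 1}, D₁ = {(1,x,y,0,0) : x³-(y-1)³ ≤ 1, x ≥ 0, 0 ≤ y ≤ 1}, D₂ = {(1,x,y,0,0) : -x³-(y-1)³ ≤ 1, x ≤ 0, 0 ≤ y ≤ 1}. Then D = conv(D₁ ∪ D) ∩ conv(D₂ ∪ D). -/

import Mathlib

/-- The disk `D = {(1,x,y,0,0) : x² + (y-1)² ≤ 1}`. -/
def diskD : Set (EuclideanSpace ℝ (Fin 5)) :=
  {v | v 0 = 1 ∧ (v 1) ^ 2 + (v 2 - 1) ^ 2 ≤ 1 ∧ v 3 = 0 ∧ v 4 = 0}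

/-- The set `D₁ = {(1,x,y,0,0) : x³ - (y-1)³ ≤ 1, x ≥ 0, 0 ≤ y ≤ 1}`. -/
def setD1 : Set (EuclideanSpace ℝ (Fin 5)) :=
  {v | v 0 = 1 ∧ (v 1) ^ 3 - (v 2 - 1) ^ 3 ≤ 1 ∧ 0 ≤ v 1 ∧ 0 ≤ v 2 ∧ v 2 ≤ 1 ∧
    v 3 = 0 ∧ v 4 = 0}

/-- The set `D₂ = {(1,x,y,0,0) : -x³ - (y-1)³ ≤ 1, x ≤ 0, 0 ≤ y ≤ 1}`. -/
def setD2 : Set (EuclideanSpace ℝ (Fin 5)) :=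
  {v | v 0 = 1 ∧ -(v 1) ^ 3 - (v 2 - 1) ^ 3 ≤ 1 ∧ v 1 ≤ 0 ∧ 0 ≤ v 2 ∧ v 2 ≤ 1 ∧
    v 3 = 0 ∧ v 4 = 0}

/-!
Let `x` be the second coordinate. All three sets lie in the strip `S = {(1,x,y,0,0) : 0 ≤ y ≤ 2}`,
and `S ∩ {x = 0} ⊆ D`. If `x ≥ 0` on `A`, then `D ∪ (S ∩ {x > 0})` is convex (a segment from `D`
to `S ∩ {x > 0}` meets `{x ≤ 0}` only before it crosses `x = 0`, at a point of `D`) and contains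
`A ∪ D`, so `conv(A ∪ D) ∩ {x ≤ 0} ⊆ D`. Taking `A = D₁` with `x` and `A = D₂` with `-x` covers
both half-planes.
-/

namespace Convex

variable {E : Type*} [AddCommGroup E] [Module ℝ E] {K S A : Set E}

theorem mem_of_mem_segment_of_apply_nonpos (hK : Convex ℝ K) (f : E →ᵃ[ℝ] ℝ) {u w p : E}
    (hu : u ∈ K) (hw : 0 < f w) (hzero : ∀ q ∈ segment ℝ u w, f q = 0 → q ∈ K)
    (hp : p ∈ segment ℝ u w) (hfp : f p ≤ 0) : p ∈ K := by
  rw [segment_eq_image_lineMap] at hzero hp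
  obtain ⟨θ, ⟨hθ0, hθ1⟩, rfl⟩ := hp
  rw [f.apply_lineMap, AffineMap.lineMap_apply_ring'] at hfp
  have hlt : f u < f w := by nlinarith
  set t := -f u / (f w - f u) with ht
  have hft : t * (f w - f u) + f u = 0 := by
    rw [ht, div_mul_cancel₀ _ (sub_pos.2 hlt).ne']; ring
  have hθt : θ ≤ t := by nlinarith
  have ht1 : t ≤ 1 := by nlinarith
  have hKt : AffineMap.lineMap u w t ∈ K := by
    refine hzero _ ⟨t, ⟨hθ0.trans hθt, ht1⟩, rfl⟩ ?_
    rwa [f.apply_lineMap, AffineMap.lineMap_apply_ring']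
  exact (hK.affine_preimage (AffineMap.lineMap u w)).ordConnected.out (by simpa using hu) hKt
    ⟨hθ0, hθt⟩

theorem union_setOf_pos (hK : Convex ℝ K) (hS : Convex ℝ S) (hKS : K ⊆ S) (f : E →ᵃ[ℝ] ℝ)
    (hzero : ∀ v ∈ S, f v = 0 → v ∈ K) : Convex ℝ (K ∪ {v ∈ S | 0 < f v}) := by
  have mixed : ∀ u ∈ K, ∀ w ∈ S, 0 < f w → segment ℝ u w ⊆ K ∪ {v ∈ S | 0 < f v} := by
    intro u hu w hwS hfw p hp
    have hseg : segment ℝ u w ⊆ S := hS.segment_subset (hKS hu) hwS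
    by_cases hfp : 0 < f p
    · exact Or.inr ⟨hseg hp, hfp⟩
    · exact Or.inl <| hK.mem_of_mem_segment_of_apply_nonpos f hu hfw
        (fun q hq => hzero q (hseg hq)) hp (not_lt.1 hfp)
  have hpos : Convex ℝ {v ∈ S | 0 < f v} := hS.inter ((convex_Ioi 0).affine_preimage f)
  refine convex_iff_segment_subset.2 ?_
  rintro u (hu | ⟨huS, hfu⟩) w (hw | ⟨hwS, hfw⟩)
  · exact (hK.segment_subset hu hw).trans Set.subset_union_left
  · exact mixed u hu w hwS hfw
  · rw [segment_symm]
    exact mixed w hw u huS hfu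
  · exact (hpos.segment_subset ⟨huS, hfu⟩ ⟨hwS, hfw⟩).trans Set.subset_union_right

theorem convexHull_union_inter_setOf_nonpos_subset (hK : Convex ℝ K) (hS : Convex ℝ S)
    (hKS : K ⊆ S) (hAS : A ⊆ S) (f : E →ᵃ[ℝ] ℝ) (hA : ∀ a ∈ A, 0 ≤ f a)
    (hzero : ∀ v ∈ S, f v = 0 → v ∈ K) : convexHull ℝ (A ∪ K) ∩ {v | f v ≤ 0} ⊆ K := by
  rintro p ⟨hp, hfp⟩
  have hAK : A ∪ K ⊆ K ∪ {v ∈ S | 0 < f v} := by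
    refine Set.union_subset (fun a ha => ?_) Set.subset_union_left
    rcases (hA a ha).lt_or_eq with hfa | hfa
    · exact Or.inr ⟨hAS ha, hfa⟩
    · exact Or.inl (hzero a (hAS ha) hfa.symm)
  rcases convexHull_min hAK (hK.union_setOf_pos hS hKS f hzero) hp with hpK | ⟨-, hfp'⟩
  · exact hpK
  · exact absurd hfp (not_le.2 hfp')

end Convex

def stripD : Set (EuclideanSpace ℝ (Fin 5)) :=
  {v | v 0 = 1 ∧ 0 ≤ v 2 ∧ v 2 ≤ 2 ∧ v 3 = 0 ∧ v 4 = 0}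

noncomputable def abscissa : EuclideanSpace ℝ (Fin 5) →ᵃ[ℝ] ℝ :=
  (EuclideanSpace.proj (1 : Fin 5)).toLinearMap.toAffineMap

@[simp]
theorem abscissa_apply (v : EuclideanSpace ℝ (Fin 5)) : abscissa v = v 1 := rfl

theorem convex_diskD : Convex ℝ diskD := by
  rintro v ⟨hv0, hv12, hv3, hv4⟩ w ⟨hw0, hw12, hw3, hw4⟩ a b ha hb hab
  obtain rfl : b = 1 - a := by linarith
  simp only [diskD, Set.mem_ofPred_eq, WithLp.ofLp_add, WithLp.ofLp_smul, Pi.add_apply,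
    Pi.smul_apply, smul_eq_mul, hv0, hw0, hv3, hw3, hv4, hw4]
  refine ⟨by ring, ?_, by ring, by ring⟩
  nlinarith [mul_nonneg ha hb, mul_nonneg (mul_nonneg ha hb) (sq_nonneg (v 1 - w 1)),
    mul_nonneg (mul_nonneg ha hb) (sq_nonneg (v 2 - w 2))]

theorem convex_stripD : Convex ℝ stripD := by
  rintro v ⟨hv0, hv2, hv2', hv3, hv4⟩ w ⟨hw0, hw2, hw2', hw3, hw4⟩ a b ha hb hab
  simp only [stripD, Set.mem_ofPred_eq, WithLp.ofLp_add, WithLp.ofLp_smul, Pi.add_apply,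
    Pi.smul_apply, smul_eq_mul, hv0, hw0, hv3, hw3, hv4, hw4]
  refine ⟨by linarith, by positivity, ?_, by ring, by ring⟩
  nlinarith [mul_le_mul_of_nonneg_left hv2' ha, mul_le_mul_of_nonneg_left hw2' hb]

theorem diskD_subset_stripD : diskD ⊆ stripD := by
  rintro v ⟨h0, h12, h3, h4⟩
  exact ⟨h0, by nlinarith [sq_nonneg (v 1)], by nlinarith [sq_nonneg (v 1)], h3, h4⟩

theorem setD1_subset_stripD : setD1 ⊆ stripD := by
  rintro v ⟨h0, -, -, h2, h2', h3, h4⟩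
  exact ⟨h0, h2, by linarith, h3, h4⟩

theorem setD2_subset_stripD : setD2 ⊆ stripD := by
  rintro v ⟨h0, -, -, h2, h2', h3, h4⟩
  exact ⟨h0, h2, by linarith, h3, h4⟩

theorem mem_diskD_of_mem_stripD_of_eq_zero {v : EuclideanSpace ℝ (Fin 5)} (hv : v ∈ stripD)
    (hv1 : v 1 = 0) : v ∈ diskD := by
  obtain ⟨h0, h2, h2', h3, h4⟩ := hv
  exact ⟨h0, by rw [hv1]; nlinarith, h3, h4⟩

/-- Equation (4.9): `D = conv(D₁ ∪ D) ∩ conv(D₂ ∪ D)`. -/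
theorem stmt17 :
    diskD = convexHull ℝ (setD1 ∪ diskD) ∩ convexHull ℝ (setD2 ∪ diskD) := by
  refine subset_antisymm (fun p hp => ⟨subset_convexHull ℝ _ (Or.inr hp),
    subset_convexHull ℝ _ (Or.inr hp)⟩) ?_
  rintro p ⟨hp1, hp2⟩
  rcases le_total (p 1) 0 with hx | hx
  · exact convex_diskD.convexHull_union_inter_setOf_nonpos_subset convex_stripD
      diskD_subset_stripD setD1_subset_stripD abscissa (fun a ha => ha.2.2.1)
      (fun _ hv => mem_diskD_of_mem_stripD_of_eq_zero hv) ⟨hp1, hx⟩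
  · exact convex_diskD.convexHull_union_inter_setOf_nonpos_subset convex_stripD
      diskD_subset_stripD setD2_subset_stripD (-abscissa) (fun a ha => by simpa using ha.2.2.1)
      (fun _ hv hv1 => mem_diskD_of_mem_stripD_of_eq_zero hv (by simpa using hv1))
      ⟨hp2, by simpa using hx⟩
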